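/- In a finite cube-free median graph G, for any fixed base vertex u, every vertex w at maximum distance from u (i.e., with d(u,w) ≥ d(u,z) for all vertices z) has degree at most 2 in G. -/

import Mathlib

/-!
Grade the vertices by their distance from `u`. In a median graph adjacent vertices lie on
consecutive levels, and uniqueness of medians controls common neighbours. If a furthest vertex
`w` had three neighbours `x₁, x₂, x₃`, all of them would lie one level below `w`; each pair
`xᵢ, xⱼ` has a common neighbour `yᵢⱼ` one level further down, the three `yᵢⱼ` have a common
neighbour `z` (their median), and these eight vertices span an induced `Q₃`.
-/

open SimpleGraph Finset

/-- The graph interval `I(u,v)`: vertices on shortest `(u,v)`-paths. -/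
def interval {V : Type*} (G : SimpleGraph V) (u v : V) : Set V :=
  {w | G.dist u w + G.dist w v = G.dist u v}

/-- A median graph: connected, and every triple of vertices has a unique median. -/
def IsMedianGraph {V : Type*} (G : SimpleGraph V) : Prop :=
  G.Connected ∧ ∀ x y z : V, ∃! m : V,
    m ∈ interval G x y ∧ m ∈ interval G y z ∧ m ∈ interval G x z

/-- A set of vertices is (graph) convex if it contains all intervals between its members. -/
def GraphConvex {V : Type*} (G : SimpleGraph V) (S : Set V) : Prop :=
  ∀ u ∈ S, ∀ v ∈ S, interval G u v ⊆ S

/-- A halfspace: a convex set with convex complement. -/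
def IsHalfspace {V : Type*} (G : SimpleGraph V) (H : Set V) : Prop :=
  GraphConvex G H ∧ GraphConvex G Hᶜ

/-- The hypercube graph `Q_k`: vertices are `{0,1}^k`, adjacent iff they differ in exactly
one coordinate. -/
def cubeGraph (k : ℕ) : SimpleGraph (Fin k → Fin 2) :=
  SimpleGraph.fromRel (fun a b => ∃! i, a i ≠ b i)

/-- A graph is cube-free if it has no induced subgraph isomorphic to `Q_3`. -/
def CubeFree {V : Type*} (G : SimpleGraph V) : Prop :=
  ¬ Nonempty (cubeGraph 3 ↪g G)

/-- A 4-cycle of the subgraph of `G` induced by `S`: a 4-element vertex subset of `S`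
inducing a cycle of length 4. -/
def IsFourCycleIn {V : Type*} (G : SimpleGraph V) (S : Set V) (t : Finset V) : Prop :=
  (↑t : Set V) ⊆ S ∧ t.card = 4 ∧ Nonempty (G.induce (↑t : Set V) ≃g SimpleGraph.cycleGraph 4)

section

variable {V : Type*} {G : SimpleGraph V}

theorem mem_interval_iff {u v w : V} :
    w ∈ interval G u v ↔ G.dist u w + G.dist w v = G.dist u v := Iff.rfl

theorem mem_interval_of_adj_of_adj {a b p : V} (hap : G.Adj a p) (hpb : G.Adj p b)
    (hab : G.dist a b = 2) : p ∈ interval G a b := by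
  rw [mem_interval_iff, dist_eq_one_iff_adj.mpr hap, dist_eq_one_iff_adj.mpr hpb, hab]

theorem SimpleGraph.dist_eq_two_of_adj_of_adj {a b p : V} (hpa : G.Adj p a) (hpb : G.Adj p b)
    (hne : a ≠ b) (hab : ¬G.Adj a b) : G.dist a b = 2 := by
  rw [dist, edist_eq_two_iff.mpr ⟨hne, hab, p, hpa.symm, hpb.symm⟩]
  rfl

theorem cubeGraph_three_adj (a b : Fin 3 → Fin 2) :
    (cubeGraph 3).Adj a b ↔
      (a 0 ≠ b 0 ∧ a 1 = b 1 ∧ a 2 = b 2) ∨ (a 0 = b 0 ∧ a 1 ≠ b 1 ∧ a 2 = b 2) ∨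
        (a 0 = b 0 ∧ a 1 = b 1 ∧ a 2 ≠ b 2) := by
  revert a b
  simp only [cubeGraph, SimpleGraph.fromRel_adj, ExistsUnique]
  decide

theorem cubeGraph_three_eq_of_forall_adj_iff {a b : Fin 3 → Fin 2}
    (h : ∀ c, (cubeGraph 3).Adj c a ↔ (cubeGraph 3).Adj c b) : a = b := by
  revert a b
  simp only [cubeGraph_three_adj]
  decide

/-- Coordinate `i` is `1` exactly at the vertices whose name carries the index `i + 1`. -/
def cubeThreeMap (w x₁ x₂ x₃ y₁₂ y₁₃ y₂₃ z : V) (a : Fin 3 → Fin 2) : V :=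
  if a 0 = 0 then
    if a 1 = 0 then (if a 2 = 0 then w else x₃) else (if a 2 = 0 then x₂ else y₂₃)
  else
    if a 1 = 0 then (if a 2 = 0 then x₁ else y₁₃) else (if a 2 = 0 then y₁₂ else z)

theorem SimpleGraph.nonempty_cubeGraph_three_embedding (ℓ : V → ℕ)
    (hℓ : ∀ a b, G.Adj a b → ℓ b = ℓ a + 1 ∨ ℓ a = ℓ b + 1) {k : ℕ}
    {w x₁ x₂ x₃ y₁₂ y₁₃ y₂₃ z : V} (hw : ℓ w = k + 3)
    (hx₁ : ℓ x₁ = k + 2) (hx₂ : ℓ x₂ = k + 2) (hx₃ : ℓ x₃ = k + 2)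
    (hy₁₂ : ℓ y₁₂ = k + 1) (hy₁₃ : ℓ y₁₃ = k + 1) (hy₂₃ : ℓ y₂₃ = k + 1) (hz : ℓ z = k)
    (hwx₁ : G.Adj w x₁) (hwx₂ : G.Adj w x₂) (hwx₃ : G.Adj w x₃)
    (hx₁y₁₂ : G.Adj x₁ y₁₂) (hx₂y₁₂ : G.Adj x₂ y₁₂) (hx₁y₁₃ : G.Adj x₁ y₁₃)
    (hx₃y₁₃ : G.Adj x₃ y₁₃) (hx₂y₂₃ : G.Adj x₂ y₂₃) (hx₃y₂₃ : G.Adj x₃ y₂₃)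
    (hy₁₂z : G.Adj y₁₂ z) (hy₁₃z : G.Adj y₁₃ z) (hy₂₃z : G.Adj y₂₃ z)
    (hx₁y₂₃ : ¬G.Adj x₁ y₂₃) (hx₂y₁₃ : ¬G.Adj x₂ y₁₃) (hx₃y₁₂ : ¬G.Adj x₃ y₁₂) :
    Nonempty (cubeGraph 3 ↪g G) := by
  set f := cubeThreeMap w x₁ x₂ x₃ y₁₂ y₁₃ y₂₃ z
  have hf : ∀ a b, G.Adj (f a) (f b) ↔ (cubeGraph 3).Adj a b := by
    simp only [f, Fin.forall_fin_succ_pi, Fin.forall_fin_zero_pi, Fin.forall_fin_two,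
      cubeGraph_three_adj, cubeThreeMap]
    simp only [Fin.isValue, Matrix.finZeroElim_eq_zero, Matrix.zero_empty,
      Matrix.Fin.cons_vecEmpty, Matrix.Fin.cons_vecCons, Fin.cons_zero, Fin.cons_one,
      Matrix.cons_val_zero, Matrix.cons_val, reduceIte, SimpleGraph.irrefl, ne_eq,
      not_true_eq_false, and_self, and_true, and_false, or_self, one_ne_zero, zero_ne_one,
      not_false_eq_true, or_true, iff_true, true_and, or_false, iff_false]
    -- Every non-edge other than `xᵢ yⱼₖ` joins two vertices on non-consecutive levels.
    and_intros
    all_goals first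
      | assumption
      | rw [G.adj_comm]; assumption
      | intro h; rcases hℓ _ _ h with h | h <;> omega
  -- Distinct vertices of `Q₃` have distinct neighbourhoods, so `f` is injective.
  refine ⟨⟨⟨f, fun a b hab => cubeGraph_three_eq_of_forall_adj_iff fun c => ?_⟩, hf _ _⟩⟩
  rw [← hf, ← hf, hab]

namespace IsMedianGraph

theorem dist_eq_add_one_or_of_adj (hG : IsMedianGraph G) (u : V) {a b : V} (h : G.Adj a b) :
    G.dist u b = G.dist u a + 1 ∨ G.dist u a = G.dist u b + 1 := by
  obtain ⟨m, ⟨hua, hab, hub⟩, -⟩ := hG.2 u a b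
  rw [mem_interval_iff] at hua hab hub
  rw [dist_eq_one_iff_adj.mpr h, dist_comm (u := a)] at hab
  omega

theorem not_adj_of_dist_eq (hG : IsMedianGraph G) (u : V) {a b : V}
    (h : G.dist u a = G.dist u b) : ¬G.Adj a b := fun hab => by
  have := hG.dist_eq_add_one_or_of_adj u hab
  omega

theorem exists_lower_common_neighbor (hG : IsMedianGraph G) (u : V) {x y : V}
    (hxy : G.dist x y = 2) (hl : G.dist u x = G.dist u y) :
    ∃ m, G.Adj x m ∧ G.Adj y m ∧ G.dist u m + 1 = G.dist u x := by
  obtain ⟨m, ⟨hux, hxy', huy⟩, -⟩ := hG.2 u x y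
  rw [mem_interval_iff] at hux hxy' huy
  rw [hxy, dist_comm (u := x)] at hxy'
  refine ⟨m, ?_, ?_, by omega⟩
  · rw [← dist_eq_one_iff_adj, dist_comm]; omega
  · rw [← dist_eq_one_iff_adj, dist_comm]; omega

theorem eq_of_adj_of_adj_of_adj (hG : IsMedianGraph G) {a b c p q : V}
    (hab : G.dist a b = 2) (hbc : G.dist b c = 2) (hac : G.dist a c = 2)
    (hap : G.Adj a p) (hbp : G.Adj b p) (hcp : G.Adj c p)
    (haq : G.Adj a q) (hbq : G.Adj b q) (hcq : G.Adj c q) : p = q :=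
  (hG.2 a b c).unique
    ⟨mem_interval_of_adj_of_adj hap hbp.symm hab, mem_interval_of_adj_of_adj hbp hcp.symm hbc,
      mem_interval_of_adj_of_adj hap hcp.symm hac⟩
    ⟨mem_interval_of_adj_of_adj haq hbq.symm hab, mem_interval_of_adj_of_adj hbq hcq.symm hbc,
      mem_interval_of_adj_of_adj haq hcq.symm hac⟩

theorem exists_adj_of_pairwise_dist_eq_two (hG : IsMedianGraph G) {a b c : V}
    (hab : G.dist a b = 2) (hbc : G.dist b c = 2) (hac : G.dist a c = 2) :
    ∃ m, G.Adj a m ∧ G.Adj b m ∧ G.Adj c m := by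
  obtain ⟨m, ⟨habm, hbcm, hacm⟩, -⟩ := hG.2 a b c
  rw [mem_interval_iff] at habm hbcm hacm
  have hbm : G.dist b m = G.dist m b := dist_comm
  have hcm : G.dist c m = G.dist m c := dist_comm
  refine ⟨m, ?_, ?_, ?_⟩ <;> rw [← dist_eq_one_iff_adj] <;> omega

theorem eq_of_lower_common_neighbors (hG : IsMedianGraph G) (u : V) {a b c c' : V}
    (hne : c ≠ c') (hc : G.dist u c' = G.dist u c)
    (ha : G.dist u a + 1 = G.dist u c) (hb : G.dist u b + 1 = G.dist u c)
    (hac : G.Adj a c) (hbc : G.Adj b c) (hac' : G.Adj a c') (hbc' : G.Adj b c') : a = b := by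
  have hcc' : G.dist c c' = 2 :=
    dist_eq_two_of_adj_of_adj hac hac' hne (hG.not_adj_of_dist_eq u hc.symm)
  have hmem : ∀ p, G.dist u p + 1 = G.dist u c → G.Adj p c → G.Adj p c' →
      p ∈ interval G u c ∧ p ∈ interval G c c' ∧ p ∈ interval G u c' := fun p hp hpc hpc' => by
    refine ⟨?_, mem_interval_of_adj_of_adj hpc.symm hpc' hcc', ?_⟩ <;>
      rw [mem_interval_iff] <;>
      simp only [dist_eq_one_iff_adj.mpr hpc, dist_eq_one_iff_adj.mpr hpc'] <;> omega
  exact (hG.2 u c c').unique (hmem a ha hac hac') (hmem b hb hbc hbc')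

theorem nonempty_cubeGraph_three_embedding_of_lower_neighbors (hG : IsMedianGraph G) (u : V)
    {w x₁ x₂ x₃ : V} (h₁ : G.Adj w x₁) (h₂ : G.Adj w x₂) (h₃ : G.Adj w x₃)
    (h₁₂ : x₁ ≠ x₂) (h₁₃ : x₁ ≠ x₃) (h₂₃ : x₂ ≠ x₃) (hl₁ : G.dist u x₁ + 1 = G.dist u w)
    (hl₂ : G.dist u x₂ + 1 = G.dist u w) (hl₃ : G.dist u x₃ + 1 = G.dist u w) :
    Nonempty (cubeGraph 3 ↪g G) := by
  have hd {p a b : V} (ha : G.Adj p a) (hb : G.Adj p b) (hne : a ≠ b)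
      (hl : G.dist u a = G.dist u b) : G.dist a b = 2 :=
    dist_eq_two_of_adj_of_adj ha hb hne (hG.not_adj_of_dist_eq u hl)
  have dx₁₂ := hd h₁ h₂ h₁₂ (by omega)
  have dx₁₃ := hd h₁ h₃ h₁₃ (by omega)
  have dx₂₃ := hd h₂ h₃ h₂₃ (by omega)
  obtain ⟨y₁₂, hx₁y₁₂, hx₂y₁₂, hl₁₂⟩ := hG.exists_lower_common_neighbor u dx₁₂ (by omega)
  obtain ⟨y₁₃, hx₁y₁₃, hx₃y₁₃, hl₁₃⟩ := hG.exists_lower_common_neighbor u dx₁₃ (by omega)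
  obtain ⟨y₂₃, hx₂y₂₃, hx₃y₂₃, hl₂₃⟩ := hG.exists_lower_common_neighbor u dx₂₃ (by omega)
  have not_below_all (p : V) (hp : G.dist u p + 2 = G.dist u w) (hp₁ : G.Adj x₁ p)
      (hp₂ : G.Adj x₂ p) (hp₃ : G.Adj x₃ p) : False := by
    obtain rfl := hG.eq_of_adj_of_adj_of_adj dx₁₂ dx₂₃ dx₁₃ hp₁ hp₂ hp₃ h₁.symm h₂.symm h₃.symm
    omega
  have hx₁y₂₃ : ¬G.Adj x₁ y₂₃ := fun h => not_below_all y₂₃ (by omega) h hx₂y₂₃ hx₃y₂₃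
  have hx₂y₁₃ : ¬G.Adj x₂ y₁₃ := fun h => not_below_all y₁₃ (by omega) hx₁y₁₃ h hx₃y₁₃
  have hx₃y₁₂ : ¬G.Adj x₃ y₁₂ := fun h => not_below_all y₁₂ (by omega) hx₁y₁₂ hx₂y₁₂ h
  have hy₁₂₁₃ : y₁₂ ≠ y₁₃ := by rintro rfl; exact hx₃y₁₂ hx₃y₁₃
  have hy₁₂₂₃ : y₁₂ ≠ y₂₃ := by rintro rfl; exact hx₃y₁₂ hx₃y₂₃
  have hy₁₃₂₃ : y₁₃ ≠ y₂₃ := by rintro rfl; exact hx₂y₁₃ hx₂y₂₃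
  obtain ⟨z, hy₁₂z, hy₁₃z, hy₂₃z⟩ := hG.exists_adj_of_pairwise_dist_eq_two
    (hd hx₁y₁₂ hx₁y₁₃ hy₁₂₁₃ (by omega)) (hd hx₃y₁₃ hx₃y₂₃ hy₁₃₂₃ (by omega))
    (hd hx₂y₁₂ hx₂y₂₃ hy₁₂₂₃ (by omega))
  have hlz : G.dist u z + 3 = G.dist u w := by
    rcases hG.dist_eq_add_one_or_of_adj u hy₁₂z with hz | hz
    · -- `x₁` and `z` would be two common neighbours of `y₁₂` and `y₁₃` one level up.
      have hx₁z : x₁ ≠ z := by rintro rfl; exact hx₁y₂₃ hy₂₃z.symm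
      exact absurd (hG.eq_of_lower_common_neighbors u hx₁z (by omega) (by omega) (by omega)
        hx₁y₁₂.symm hx₁y₁₃.symm hy₁₂z hy₁₃z) hy₁₂₁₃
    · omega
  exact nonempty_cubeGraph_three_embedding (G.dist u)
    (fun _ _ => hG.dist_eq_add_one_or_of_adj u) (k := G.dist u z)
    (by omega) (by omega) (by omega) (by omega) (by omega) (by omega) (by omega)
    rfl h₁ h₂ h₃ hx₁y₁₂ hx₂y₁₂ hx₁y₁₃ hx₃y₁₃ hx₂y₂₃ hx₃y₂₃ hy₁₂z hy₁₃z hy₂₃z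
    hx₁y₂₃ hx₂y₁₃ hx₃y₁₂

end IsMedianGraph

end

theorem furthest_vertex_degree_le_two_general {V : Type*} (G : SimpleGraph V)
    (hG : IsMedianGraph G) (hcf : CubeFree G) (u w : V)
    (hmax : ∀ z : V, G.dist u z ≤ G.dist u w) :
    (G.neighborSet w).ncard ≤ 2 := by
  by_contra! hdeg
  obtain ⟨x₁, x₂, x₃, h₁, h₂, h₃, h₁₂, h₁₃, h₂₃⟩ :=
    (Set.two_lt_ncard_iff (Set.finite_of_ncard_pos (by omega))).mp hdeg
  have lower (x : V) (hx : G.Adj w x) : G.dist u x + 1 = G.dist u w := by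
    have := hmax x
    have := hG.dist_eq_add_one_or_of_adj u hx
    omega
  exact hcf (hG.nonempty_cubeGraph_three_embedding_of_lower_neighbors u h₁ h₂ h₃ h₁₂ h₁₃ h₂₃
    (lower x₁ h₁) (lower x₂ h₂) (lower x₃ h₃))

/-- In a finite cube-free median graph, every vertex `w` at maximum distance
from a fixed base vertex `u` has degree at most 2. -/
theorem furthest_vertex_degree_le_two {V : Type*} [Fintype V] (G : SimpleGraph V)
    (hG : IsMedianGraph G) (hcf : CubeFree G) (u w : V)
    (hmax : ∀ z : V, G.dist u z ≤ G.dist u w) :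
    (G.neighborSet w).ncard ≤ 2 :=
  furthest_vertex_degree_le_two_general G hG hcf u w hmax
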